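/- arXiv:math/9610210 — 2 statements merged into one kernel-verified Lean document; each statement's English description precedes it below -/
import Mathlib

section
/- Suppose x_1,…,x_N are pairwise disjointly supported finitely supported real sequences and let a_k = max supp x_k for each k. Then ‖Σ_{k=1}^N x_k‖_T ≤ 4 ‖Σ_{k=1}^N ‖x_k‖_T e_{a_k}‖_T^#, where e_a denotes the a-th coordinate vector. -/
/-!
Both norms are least in classes of norms that are closed under changing the sign of one
coordinate, so they are invariant under sign changes and hence monotone in `|y|`.

The Tsirelson norm is dominated by the limit of its usual approximations `‖·‖_m` from below
(`‖·‖_0 = ‖·‖_∞`, `‖y‖_{m+1} = max ‖y‖_m (sup_E ½ Σ_i ‖E_i y‖_m)` over admissible `E`), since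
that limit is itself a candidate. So it suffices to bound `‖Σ x_k‖_m` by induction on `m`,
for all disjoint families at once. Given admissible blocks `E_0 < ⋯ < E_{r-1}`, split each
`E_i (Σ x_k)` into the `x_k` meeting `E_i` only, bounded by induction inside `E_i`, and the
`x_k` meeting several blocks, for which `½ Σ_i ‖E_i x_k‖_m ≤ ‖x_k‖_T`. Grouping the latter by
their first block `E_j`, a group has at most `a_k` members for each of its members `k`, so the
sharp condition bounds its `Σ ‖x_k‖_T` by twice the sharp norm of its atoms `‖x_k‖_T e_{a_k}`.
The `2r` groups of atoms (per block, those of single-block and of first-block vectors) are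
disjointly supported beyond `r`, so the sharp condition applies once more. The constant
reproduces itself: `½ · 4 = 2` matches the factor of the first sharp estimate, and the second
one contributes the other `2`.
-/

open Function Filter
open scoped BigOperators ENNReal

noncomputable section

namespace CK

/-- The formal (finite-support) linear combination `∑ᶠ i, a i • e i`. -/
def vecSum {X : Type*} [NormedAddCommGroup X] [NormedSpace ℝ X] (e : ℕ → X) (a : ℕ → ℝ) : X :=
  ∑ᶠ i, a i • e i

/-- `u` is an unconditional basis of `X`: every vector has a unique unconditional
(i.e. unordered, in the sense of `HasSum`) expansion along `u`. -/
def IsUnconditionalBasis {ι : Type*} {X : Type*} [NormedAddCommGroup X] [NormedSpace ℝ X]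
    (u : ι → X) : Prop :=
  ∀ x : X, ∃! a : ι → ℝ, HasSum (fun i => a i • u i) x

/-- Two systems of vectors are equivalent: the formal identity between finite linear
combinations is bounded both ways (hence extends to an isomorphism of closed spans). -/
def BasisEquiv {ι : Type*} {X Y : Type*} [NormedAddCommGroup X] [NormedSpace ℝ X]
    [NormedAddCommGroup Y] [NormedSpace ℝ Y] (u : ι → X) (v : ι → Y) : Prop :=
  ∃ c C : ℝ, 0 < c ∧ ∀ (a : ι → ℝ) (s : Finset ι),
    c * ‖∑ i ∈ s, a i • u i‖ ≤ ‖∑ i ∈ s, a i • v i‖ ∧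
      ‖∑ i ∈ s, a i • v i‖ ≤ C * ‖∑ i ∈ s, a i • u i‖

/-- Permutative equivalence of two systems of vectors. -/
def PermutativelyEquiv {ι : Type*} {X Y : Type*} [NormedAddCommGroup X] [NormedSpace ℝ X]
    [NormedAddCommGroup Y] [NormedSpace ℝ Y] (u : ι → X) (v : ι → Y) : Prop :=
  ∃ π : Equiv.Perm ι, BasisEquiv u (fun i => v (π i))

/-- `X` has a unique unconditional basis: any two normalized unconditional bases are
permutatively equivalent. -/
def HasUniqueUnconditionalBasis (X : Type*) [NormedAddCommGroup X] [NormedSpace ℝ X] : Prop :=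
  ∀ u v : ℕ → X, IsUnconditionalBasis u → IsUnconditionalBasis v →
    (∀ n, ‖u n‖ = 1) → (∀ n, ‖v n‖ = 1) → PermutativelyEquiv u v

/-- The closed linear span of a sequence. -/
def spanCl {X : Type*} [NormedAddCommGroup X] [NormedSpace ℝ X] (u : ℕ → X) : Submodule ℝ X :=
  (Submodule.span ℝ (Set.range u)).topologicalClosure

/-- The members of a sequence, as elements of their closed linear span. -/
def inSpanCl {X : Type*} [NormedAddCommGroup X] [NormedSpace ℝ X] (u : ℕ → X) (n : ℕ) :
    ↥(spanCl u) :=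
  ⟨u n, (Submodule.span ℝ (Set.range u)).le_topologicalClosure (Submodule.subset_span ⟨n, rfl⟩)⟩

/-- `u` is an unconditional basic sequence: it is an unconditional basis of its closed span. -/
def IsUncondBasicSeq {X : Type*} [NormedAddCommGroup X] [NormedSpace ℝ X] (u : ℕ → X) : Prop :=
  IsUnconditionalBasis (inSpanCl u)

/-- The closed span of `u` is the range of a bounded linear projection. -/
def IsComplementedSeq {X : Type*} [NormedAddCommGroup X] [NormedSpace ℝ X] (u : ℕ → X) : Prop :=
  ∃ P : X →L[ℝ] X, P.comp P = P ∧ LinearMap.range (P : X →ₗ[ℝ] X) = spanCl u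

/-- A finite linear combination of the `f j`, as an element of the closed span. -/
def spanElt {X : Type*} [NormedAddCommGroup X] [NormedSpace ℝ X] (f : ℕ → X) (a : ℕ → ℝ)
    (s : Finset ℕ) : ↥(spanCl f) :=
  ⟨∑ j ∈ s, a j • f j, by
    apply (Submodule.span ℝ (Set.range f)).le_topologicalClosure
    exact Submodule.sum_mem _ fun j _ => Submodule.smul_mem _ _ (Submodule.subset_span ⟨j, rfl⟩)⟩

/-- The lattice (in the coordinatewise order induced by the basic sequence `f`) given by the
closed span of `f` is sufficiently lattice Euclidean: uniformly complemented lattice copies of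
`ℓ₂ⁿ`, the projections being realized by operators `S, T` with `S ∘ T = id`, `‖S‖‖T‖ ≤ M` and
`S` a lattice homomorphism (expressed coordinatewise on finite combinations of the `f j`). -/
def SuffLatticeEuclideanSeq {X : Type*} [NormedAddCommGroup X] [NormedSpace ℝ X]
    (f : ℕ → X) : Prop :=
  ∃ M : ℝ, ∀ n : ℕ, ∃ (S : ↥(spanCl f) →L[ℝ] EuclideanSpace ℝ (Fin n))
    (T : EuclideanSpace ℝ (Fin n) →L[ℝ] ↥(spanCl f)),
    (∀ v, S (T v) = v) ∧ ‖S‖ * ‖T‖ ≤ M ∧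
    ∀ (a b : ℕ → ℝ) (s : Finset ℕ) (i : Fin n),
      S (spanElt f (fun j => max (a j) (b j)) s) i =
        max (S (spanElt f a s) i) (S (spanElt f b s) i)

/-- The canonical basis of the square `Z ⊕ Z`:
`(u 0, 0), (0, u 0), (u 1, 0), (0, u 1), …`. -/
def squareBasis {X : Type*} [NormedAddCommGroup X] [NormedSpace ℝ X] (u : ℕ → X) : ℕ → X × X :=
  fun k => if Even k then (u (k / 2), 0) else (0, u (k / 2))

/-- The system `e` is left-dominant with constant `γ`. -/
def LeftDominantWith {X : Type*} [NormedAddCommGroup X] [NormedSpace ℝ X]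
    (e : ℕ → X) (γ : ℝ) : Prop :=
  ∀ (n : ℕ) (u v : Fin n → ℕ → ℝ),
    (∀ k, (Function.support (u k)).Finite) → (∀ k, (Function.support (v k)).Finite) →
    (Pairwise fun k l => Disjoint (Function.support (u k)) (Function.support (u l))) →
    (Pairwise fun k l => Disjoint (Function.support (v k)) (Function.support (v l))) →
    (∀ k, ∀ i ∈ Function.support (u k), ∀ j ∈ Function.support (v k), i < j) →
    (∀ k, ‖vecSum e (v k)‖ ≤ ‖vecSum e (u k)‖) →
    ‖vecSum e (fun i => ∑ k, v k i)‖ ≤ γ * ‖vecSum e (fun i => ∑ k, u k i)‖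

/-- The system `e` is right-dominant with constant `γ`. -/
def RightDominantWith {X : Type*} [NormedAddCommGroup X] [NormedSpace ℝ X]
    (e : ℕ → X) (γ : ℝ) : Prop :=
  ∀ (n : ℕ) (u v : Fin n → ℕ → ℝ),
    (∀ k, (Function.support (u k)).Finite) → (∀ k, (Function.support (v k)).Finite) →
    (Pairwise fun k l => Disjoint (Function.support (u k)) (Function.support (u l))) →
    (Pairwise fun k l => Disjoint (Function.support (v k)) (Function.support (v l))) →
    (∀ k, ∀ i ∈ Function.support (u k), ∀ j ∈ Function.support (v k), i < j) →
    (∀ k, ‖vecSum e (u k)‖ ≤ ‖vecSum e (v k)‖) →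
    ‖vecSum e (fun i => ∑ k, u k i)‖ ≤ γ * ‖vecSum e (fun i => ∑ k, v k i)‖

def IsLeftDominant {X : Type*} [NormedAddCommGroup X] [NormedSpace ℝ X] (e : ℕ → X) : Prop :=
  ∃ γ : ℝ, 1 ≤ γ ∧ LeftDominantWith e γ

def IsRightDominant {X : Type*} [NormedAddCommGroup X] [NormedSpace ℝ X] (e : ℕ → X) : Prop :=
  ∃ γ : ℝ, 1 ≤ γ ∧ RightDominantWith e γ

/-- The norm of the unit vector basis of `ℓ_p^n` (`p = ∞` giving the sup norm). -/
def lpNormFin (p : ℝ≥0∞) {n : ℕ} (c : Fin n → ℝ) : ℝ :=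
  if p = ⊤ then ⨆ k, |c k| else (∑ k, |c k| ^ p.toReal) ^ (1 / p.toReal)

/-- `ℓ_p` is disjointly finitely representable in the sequence space spanned by `e`. -/
def DisjointlyFinitelyRepresentable (p : ℝ≥0∞) {X : Type*} [NormedAddCommGroup X]
    [NormedSpace ℝ X] (e : ℕ → X) : Prop :=
  ∀ (n : ℕ) (ε : ℝ), 0 < ε → ∃ a : Fin n → ℕ → ℝ,
    (∀ k, (Function.support (a k)).Finite) ∧
    (Pairwise fun k l => Disjoint (Function.support (a k)) (Function.support (a l))) ∧
    ∀ c : Fin n → ℝ,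
      (1 + ε)⁻¹ * lpNormFin p c ≤ ‖vecSum e fun i => ∑ k, c k * a k i‖ ∧
      ‖vecSum e fun i => ∑ k, c k * a k i‖ ≤ (1 + ε) * lpNormFin p c

/-- `X` is sufficiently Euclidean: `ℓ₂ⁿ`'s are uniformly complementably representable in `X`. -/
def SufficientlyEuclidean (X : Type*) [NormedAddCommGroup X] [NormedSpace ℝ X] : Prop :=
  ∃ M : ℝ, ∀ n : ℕ, ∃ (S : X →L[ℝ] EuclideanSpace ℝ (Fin n))
    (T : EuclideanSpace ℝ (Fin n) →L[ℝ] X), (∀ v, S (T v) = v) ∧ ‖S‖ * ‖T‖ ≤ M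

/-- Left dominance for an extended-real-valued Köthe norm on sequences. -/
def ENormLeftDominant (N : (ℕ → ℝ) → ℝ≥0∞) (γ : ℝ) : Prop :=
  ∀ (n : ℕ) (u v : Fin n → ℕ → ℝ),
    (∀ k, (Function.support (u k)).Finite) → (∀ k, (Function.support (v k)).Finite) →
    (Pairwise fun k l => Disjoint (Function.support (u k)) (Function.support (u l))) →
    (Pairwise fun k l => Disjoint (Function.support (v k)) (Function.support (v l))) →
    (∀ k, ∀ i ∈ Function.support (u k), ∀ j ∈ Function.support (v k), i < j) →
    (∀ k, N (v k) ≤ N (u k)) →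
    N (fun i => ∑ k, v k i) ≤ ENNReal.ofReal γ * N (fun i => ∑ k, u k i)

/-- Right dominance for an extended-real-valued Köthe norm on sequences. -/
def ENormRightDominant (N : (ℕ → ℝ) → ℝ≥0∞) (γ : ℝ) : Prop :=
  ∀ (n : ℕ) (u v : Fin n → ℕ → ℝ),
    (∀ k, (Function.support (u k)).Finite) → (∀ k, (Function.support (v k)).Finite) →
    (Pairwise fun k l => Disjoint (Function.support (u k)) (Function.support (u l))) →
    (Pairwise fun k l => Disjoint (Function.support (v k)) (Function.support (v l))) →
    (∀ k, ∀ i ∈ Function.support (u k), ∀ j ∈ Function.support (v k), i < j) →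
    (∀ k, N (u k) ≤ N (v k)) →
    N (fun i => ∑ k, u k i) ≤ ENNReal.ofReal γ * N (fun i => ∑ k, v k i)

/-- The Köthe dual norm: `‖f‖_{X*} = sup { Σ |f n g n| : ‖g‖_X ≤ 1 }`. -/
def kotheDual (N : (ℕ → ℝ) → ℝ≥0∞) : (ℕ → ℝ) → ℝ≥0∞ :=
  fun f => ⨆ g : {g : ℕ → ℝ // N g ≤ 1}, ∑' n, ENNReal.ofReal |f n * (g : ℕ → ℝ) n|

/-- The Nakano norm of a finitely supported sequence. -/
def nakanoNormFin (p : ℕ → ℝ) (s : Finset ℕ) (a : ℕ → ℝ) : ℝ :=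
  sInf {lam : ℝ | 0 < lam ∧ ∑ i ∈ s, (|a i| / lam) ^ (p i) ≤ 1}

/-- The Orlicz (Luxemburg) norm of a finitely supported sequence. -/
def orliczNormFin (F : ℝ → ℝ) (s : Finset ℕ) (a : ℕ → ℝ) : ℝ :=
  sInf {lam : ℝ | 0 < lam ∧ ∑ i ∈ s, F (|a i| / lam) ≤ 1}

/-- The Orlicz function `F(t) ∼ t |log t|^{-a}`:
`F(t) = t^{1+a}` for `e⁻¹ ≤ t ≤ 1` and `F(t) = e^{-a} t |log t|^{-a}` for `0 < t ≤ e⁻¹`. -/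
def Fone (a : ℝ) : ℝ → ℝ := fun t =>
  if t ≤ Real.exp (-1) then Real.exp (-a) * t * |Real.log t| ^ (-a) else t ^ (1 + a)

/-- The Orlicz function `F(t) ∼ t² |log t|⁻¹`:
`F(t) = t³` for `e⁻¹ ≤ t ≤ 1` and `F(t) = e⁻² t² |log t|⁻¹` for `0 < t ≤ e⁻¹`. -/
def Ftwo : ℝ → ℝ := fun t =>
  if t ≤ Real.exp (-1) then Real.exp (-2) * t ^ (2 : ℕ) * |Real.log t|⁻¹ else t ^ (3 : ℕ)

/-- A norm on `c₀₀ = ℕ →₀ ℝ` satisfying the defining inequalities of the Tsirelson norm. -/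
def IsTsiCandidate (N : (ℕ →₀ ℝ) → ℝ) : Prop :=
  (∀ x, 0 ≤ N x) ∧ (∀ (c : ℝ) (x), N (c • x) = |c| * N x) ∧
  (∀ x y, N (x + y) ≤ N x + N y) ∧
  (∀ x, ∀ i : ℕ, |x i| ≤ N x) ∧
  (∀ (n : ℕ) (xs : Fin n → (ℕ →₀ ℝ)),
    (∀ j k : Fin n, j < k → ∀ i ∈ (xs j).support, ∀ i' ∈ (xs k).support, i < i') →
    (∀ j : Fin n, ∀ i ∈ (xs j).support, n ≤ i) →
    (1 / 2 : ℝ) * ∑ j, N (xs j) ≤ N (∑ j, xs j))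

/-- The Tsirelson norm: the minimal norm on `c₀₀` dominating the sup norm and satisfying
`(1/2) Σ ‖x_j‖ ≤ ‖Σ x_j‖` for successive vectors `n ≤ supp x₁ < ⋯ < supp x_n`. -/
def IsTsirelsonNorm (N : (ℕ →₀ ℝ) → ℝ) : Prop :=
  IsTsiCandidate N ∧ ∀ N', IsTsiCandidate N' → ∀ x, N x ≤ N' x

/-- A norm on `c₀₀` satisfying the defining inequalities of the disjoint-version Tsirelson
norm `‖·‖_T^#`. -/
def IsTsiSharpCandidate (N : (ℕ →₀ ℝ) → ℝ) : Prop :=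
  (∀ x, 0 ≤ N x) ∧ (∀ (c : ℝ) (x), N (c • x) = |c| * N x) ∧
  (∀ x y, N (x + y) ≤ N x + N y) ∧
  (∀ x, ∀ i : ℕ, |x i| ≤ N x) ∧
  (∀ (n : ℕ) (xs : Fin (2 * n) → (ℕ →₀ ℝ)),
    (Pairwise fun j k => Disjoint (xs j).support (xs k).support) →
    (∀ j, ∀ i ∈ (xs j).support, n ≤ i) →
    (1 / 2 : ℝ) * ∑ j, N (xs j) ≤ N (∑ j, xs j))

/-- The norm `‖·‖_T^#`: the least norm on `c₀₀` dominating the sup norm and satisfying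
`(1/2) Σ_{j=1}^{2n} ‖x_j‖ ≤ ‖Σ x_j‖` for `2n` disjointly supported vectors with
`min supp x_j ≥ n`. -/
def IsTsirelsonSharpNorm (N : (ℕ →₀ ℝ) → ℝ) : Prop :=
  IsTsiSharpCandidate N ∧ ∀ N', IsTsiSharpCandidate N' → ∀ x, N x ≤ N' x

open scoped Classical in
/-- `V(A)`: the set of `j` such that for some `i ∈ A` and some `k`, `(i,k) ∈ G` and
`(j,k) ∈ G`. -/
def Vstep (n : ℕ) (G : Finset (Fin n × Fin n)) (A : Finset (Fin n)) : Finset (Fin n) :=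
  Finset.univ.filter fun j => ∃ i ∈ A, ∃ k, (i, k) ∈ G ∧ (j, k) ∈ G

open scoped Classical in
/-- `G^r`: the set of pairs `(i,j)` such that `(k,j) ∈ G` for some `k ∈ V^r({i})`. -/
def Gpow (n : ℕ) (G : Finset (Fin n × Fin n)) (r : ℕ) : Finset (Fin n × Fin n) :=
  Finset.univ.filter fun p => ∃ k, (k, p.2) ∈ G ∧ k ∈ (Vstep n G)^[r] {p.1}

/-- A family of finite-dimensional sequence spaces (given by normalized monotone bases `b i`)
is sufficiently lattice Euclidean. -/
def SuffLatticeEuclideanFam {ι : Type*} {E : ι → Type*} [∀ i, NormedAddCommGroup (E i)]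
    [∀ i, NormedSpace ℝ (E i)] {n : ι → ℕ} (b : ∀ i, Fin (n i) → E i) : Prop :=
  ∃ M : ℝ, ∀ m : ℕ, ∃ i : ι, ∃ (S : E i →L[ℝ] EuclideanSpace ℝ (Fin m))
    (T : EuclideanSpace ℝ (Fin m) →L[ℝ] E i),
    (∀ v, S (T v) = v) ∧ ‖S‖ * ‖T‖ ≤ M ∧
    ∀ (a c : Fin (n i) → ℝ) (k : Fin m),
      S (∑ j, max (a j) (c j) • b i j) k =
        max (S (∑ j, a j • b i j) k) (S (∑ j, c j • b i j) k)

end CK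

namespace CK

open Finset

section SignFlip

def signFlip (i : ℕ) : (ℕ →₀ ℝ) →ₗ[ℝ] (ℕ →₀ ℝ) :=
  LinearMap.id - (2 : ℝ) • (Finsupp.lsingle i ∘ₗ Finsupp.lapply i)

lemma signFlip_apply (i j : ℕ) (y : ℕ →₀ ℝ) :
    signFlip i y j = if j = i then -y j else y j := by
  rcases eq_or_ne j i with rfl | h
  · simp [signFlip]; ring
  · simp [signFlip, h]

lemma abs_signFlip_apply (i j : ℕ) (y : ℕ →₀ ℝ) : |signFlip i y j| = |y j| := by
  rw [signFlip_apply]; split_ifs <;> simp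

lemma support_signFlip (i : ℕ) (y : ℕ →₀ ℝ) : (signFlip i y).support = y.support := by
  ext j; simp only [Finsupp.mem_support_iff, signFlip_apply]; split_ifs <;> simp

lemma signFlip_involutive (i : ℕ) : Function.Involutive (signFlip i) := fun y => by
  ext j; simp only [signFlip_apply]; split_ifs <;> simp

lemma IsTsiCandidate.comp_signFlip {N : (ℕ →₀ ℝ) → ℝ} (h : IsTsiCandidate N) (i : ℕ) :
    IsTsiCandidate (N ∘ signFlip i) := by
  obtain ⟨h0, h1, h2, h3, h4⟩ := h
  refine ⟨fun x => h0 _, fun c x => by simp [h1], fun x y => by simpa using h2 _ _,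
    fun x j => by simpa [abs_signFlip_apply] using h3 (signFlip i x) j, fun n xs hs hn => ?_⟩
  simpa [map_sum] using h4 n (fun j => signFlip i (xs j)) (by simpa [support_signFlip] using hs)
    (by simpa [support_signFlip] using hn)

lemma IsTsiSharpCandidate.comp_signFlip {N : (ℕ →₀ ℝ) → ℝ} (h : IsTsiSharpCandidate N)
    (i : ℕ) : IsTsiSharpCandidate (N ∘ signFlip i) := by
  obtain ⟨h0, h1, h2, h3, h4⟩ := h
  refine ⟨fun x => h0 _, fun c x => by simp [h1], fun x y => by simpa using h2 _ _,
    fun x j => by simpa [abs_signFlip_apply] using h3 (signFlip i x) j, fun n xs hs hn => ?_⟩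
  simpa [map_sum] using h4 n (fun j => signFlip i (xs j)) (by simpa [support_signFlip] using hs)
    (by simpa [support_signFlip] using hn)

lemma apply_eq_of_minimal {α : Type*} {P : (α → ℝ) → Prop} {N : α → ℝ}
    (hmin : ∀ N', P N' → ∀ x, N x ≤ N' x) {T : α → α} (hT : Function.Involutive T)
    (hP : P (N ∘ T)) (x : α) : N (T x) = N x :=
  le_antisymm (by simpa [hT x] using hmin _ hP (T x)) (hmin _ hP x)

variable {Nn : (ℕ →₀ ℝ) → ℝ}

lemma apply_update_le (hhom : ∀ (c : ℝ) (x), Nn (c • x) = |c| * Nn x)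
    (hadd : ∀ x y, Nn (x + y) ≤ Nn x + Nn y) (hflip : ∀ i y, Nn (signFlip i y) = Nn y)
    {y : ℕ →₀ ℝ} {i : ℕ} {c : ℝ} (hc : |c| ≤ |y i|) :
    Nn (y.update i c) ≤ Nn y := by
  rcases eq_or_ne (y i) 0 with hy | hy
  · rw [hy, abs_zero, abs_nonpos_iff] at hc
    rw [hc, ← hy, Finsupp.update_self]
  set μ := c / y i
  have hμ : |μ| ≤ 1 := by rw [abs_div]; exact div_le_one_of_le₀ hc (abs_nonneg _)
  obtain ⟨hμ₁, hμ₂⟩ := abs_le.mp hμ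
  have hconv : y.update i c = ((1 + μ) / 2) • y + ((1 - μ) / 2) • signFlip i y := by
    ext j
    simp only [Finsupp.coe_update, Function.update_apply, Finsupp.add_apply, Finsupp.smul_apply,
      signFlip_apply, smul_eq_mul]
    split_ifs with h
    · subst h; simp only [μ]; field_simp; ring
    · ring
  calc Nn (y.update i c) ≤ ((1 + μ) / 2) * Nn y + ((1 - μ) / 2) * Nn y := by
        rw [hconv]
        refine (hadd _ _).trans_eq ?_
        rw [hhom, hhom, hflip, abs_of_nonneg (by linarith), abs_of_nonneg (by linarith)]
    _ = Nn y := by ring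

lemma le_of_forall_abs_le (hhom : ∀ (c : ℝ) (x), Nn (c • x) = |c| * Nn x)
    (hadd : ∀ x y, Nn (x + y) ≤ Nn x + Nn y) (hflip : ∀ i y, Nn (signFlip i y) = Nn y)
    {y z : ℕ →₀ ℝ} (h : ∀ j, |z j| ≤ |y j|) : Nn z ≤ Nn y := by
  suffices H : ∀ s : Finset ℕ, ∀ y : ℕ →₀ ℝ, (∀ j, |z j| ≤ |y j|) →
      (∀ j ∉ s, z j = y j) → Nn z ≤ Nn y by
    refine H (y.support ∪ z.support) y h fun j hj => ?_
    simp only [mem_union, Finsupp.mem_support_iff, not_or, not_not] at hj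
    rw [hj.1, hj.2]
  intro s
  induction s using Finset.induction_on with
  | empty => exact fun y _ hzy => (congrArg Nn (Finsupp.ext fun j => hzy j (notMem_empty j))).le
  | insert j₀ s _ ih =>
    intro y hle hzy
    refine (ih (y.update j₀ (z j₀)) (fun j => ?_) (fun j hj => ?_)).trans
      (apply_update_le hhom hadd hflip (hle j₀))
    · rcases eq_or_ne j j₀ with rfl | hj
      · simp
      · simpa [Finsupp.coe_update, hj] using hle j
    · rcases eq_or_ne j j₀ with rfl | hj'
      · simp
      · simpa [Finsupp.coe_update, hj'] using hzy j (by simp [hj, hj'])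

end SignFlip

lemma IsTsirelsonNorm.mono {N : (ℕ →₀ ℝ) → ℝ} (hN : IsTsirelsonNorm N) {y z : ℕ →₀ ℝ}
    (h : ∀ j, |z j| ≤ |y j|) : N z ≤ N y :=
  le_of_forall_abs_le hN.1.2.1 hN.1.2.2.1
    (fun i => apply_eq_of_minimal hN.2 (signFlip_involutive i) (hN.1.comp_signFlip i)) h

lemma IsTsirelsonSharpNorm.mono {N : (ℕ →₀ ℝ) → ℝ} (hN : IsTsirelsonSharpNorm N)
    {y z : ℕ →₀ ℝ} (h : ∀ j, |z j| ≤ |y j|) : N z ≤ N y :=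
  le_of_forall_abs_le hN.1.2.1 hN.1.2.2.1
    (fun i => apply_eq_of_minimal hN.2 (signFlip_involutive i) (hN.1.comp_signFlip i)) h

lemma IsTsiSharpCandidate.half_sum_le {Ns : (ℕ →₀ ℝ) → ℝ} (hNs : IsTsiSharpCandidate Ns)
    {ι : Type*} [Fintype ι] {n : ℕ} (hι : Fintype.card ι = 2 * n) (y : ι → ℕ →₀ ℝ)
    (hdisj : Pairwise (Disjoint on fun i => (y i).support))
    (hsupp : ∀ i, ∀ p ∈ (y i).support, n ≤ p) :
    (1 / 2 : ℝ) * ∑ i, Ns (y i) ≤ Ns (∑ i, y i) := by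
  let e := (Fintype.equivFinOfCardEq hι).symm
  have h := hNs.2.2.2.2 n (fun j => y (e j)) (hdisj.comp_of_injective e.injective)
    (fun j => hsupp (e j))
  rwa [Equiv.sum_comp e (fun i => Ns (y i)), Equiv.sum_comp e y] at h

section Atoms

variable {ι : Type*} (s t : Finset ι) (a : ι → ℕ) (w w' : ι → ℝ)

def atoms : ℕ →₀ ℝ := ∑ k ∈ s, Finsupp.single (a k) (w k)

lemma atoms_apply (j : ℕ) :
    atoms s a w j = ∑ k ∈ s, if a k = j then w k else 0 := by
  simp only [atoms, Finsupp.finsetSum_apply, Finsupp.single_apply]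

variable {s t a w w'}

lemma support_atoms_subset : (atoms s a w).support ⊆ s.image a :=
  Finsupp.support_finsetSum.trans <| biUnion_subset.mpr fun _ hk =>
    (Finsupp.support_single_subset).trans (singleton_subset_iff.mpr (mem_image_of_mem a hk))

lemma disjoint_support_atoms (ha : Function.Injective a) (hst : Disjoint s t) :
    Disjoint (atoms s a w).support (atoms t a w').support := by
  refine Finset.disjoint_left.mpr fun p hp hq => ?_
  obtain ⟨k, hk, rfl⟩ := mem_image.mp (support_atoms_subset hp)
  obtain ⟨k', hk', hkk'⟩ := mem_image.mp (support_atoms_subset hq)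
  exact Finset.disjoint_left.mp hst hk (ha hkk' ▸ hk')

lemma abs_atoms_apply_le (hst : s ⊆ t) (hw : ∀ k ∈ s, 0 ≤ w k ∧ w k ≤ w' k)
    (hw' : ∀ k ∈ t, 0 ≤ w' k) (j : ℕ) : |atoms s a w j| ≤ |atoms t a w' j| := by
  have hnn : ∀ {u : Finset ι} {v : ι → ℝ}, (∀ k ∈ u, 0 ≤ v k) → 0 ≤ atoms u a v j :=
    fun hv => by rw [atoms_apply]; exact sum_nonneg fun k hk => by split_ifs <;> simp [hv k hk]
  rw [abs_of_nonneg (hnn fun k hk => (hw k hk).1), abs_of_nonneg (hnn hw'), atoms_apply,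
    atoms_apply]
  calc ∑ k ∈ s, (if a k = j then w k else 0) ≤ ∑ k ∈ s, if a k = j then w' k else 0 :=
        sum_le_sum fun k hk => by split_ifs <;> simp [(hw k hk).2]
    _ ≤ ∑ k ∈ t, if a k = j then w' k else 0 :=
        sum_le_sum_of_subset_of_nonneg hst fun k hk _ => by split_ifs <;> simp [hw' k hk]

lemma sum_le_two_mul_atoms {Ns : (ℕ →₀ ℝ) → ℝ} (hNs : IsTsiSharpCandidate Ns)
    (ha : Function.Injective a) (hs : ∀ k ∈ s, #s ≤ a k) :
    ∑ k ∈ s, w k ≤ 2 * Ns (atoms s a w) := by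
  -- the `#s` atoms, padded with `#s` zeros to the `2 * #s` pieces of the sharp condition
  let y : s ⊕ s → ℕ →₀ ℝ := Sum.elim (fun k => Finsupp.single (a k) (w k)) 0
  have hdisj : Pairwise (Disjoint on fun i => (y i).support) := by
    rintro (k | k) (k' | k') hne <;>
      simp only [Function.onFun, y, Sum.elim_inl, Sum.elim_inr, Pi.zero_apply,
        Finsupp.support_zero, disjoint_empty_left, disjoint_empty_right]
    have hkk' : (k : ι) ≠ k' := Subtype.coe_injective.ne fun h => hne (congrArg Sum.inl h)
    exact (disjoint_singleton.mpr (ha.ne hkk')).mono Finsupp.support_single_subset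
      Finsupp.support_single_subset
  have hsupp : ∀ i, ∀ p ∈ (y i).support, #s ≤ p := by
    rintro (k | k) p hp
    · obtain rfl := Finset.mem_singleton.mp (Finsupp.support_single_subset hp)
      exact hs k k.2
    · simp [y] at hp
  have key := hNs.half_sum_le (by simp [two_mul]) y hdisj hsupp
  have hsum : ∑ i, y i = atoms s a w := by
    simp [y, atoms, Fintype.sum_sum_type, Finset.sum_attach s (fun k => Finsupp.single (a k) (w k))]
  have hlow : ∑ k ∈ s, w k ≤ ∑ i, Ns (y i) := by
    rw [Fintype.sum_sum_type, ← Finset.sum_coe_sort s]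
    refine le_add_of_le_of_nonneg (sum_le_sum fun k _ => ?_) (sum_nonneg fun _ _ => hNs.1 _)
    simpa [y] using (le_abs_self _).trans (hNs.2.2.2.1 (Finsupp.single (a k) (w k)) (a k))
  rw [hsum] at key
  linarith

end Atoms

structure AdmissibleFamily where
  len : ℕ
  sets : Fin len → Finset ℕ
  lt_of_lt : ∀ i j, i < j → ∀ p ∈ sets i, ∀ q ∈ sets j, p < q
  len_le : ∀ i, ∀ p ∈ sets i, len ≤ p

namespace AdmissibleFamily

variable (E : AdmissibleFamily)

lemma pairwise_disjoint : Pairwise (Disjoint on E.sets) := by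
  intro i j hij
  refine Finset.disjoint_left.mpr fun p hi hj => ?_
  rcases lt_or_gt_of_ne hij with h | h
  · exact lt_irrefl p (E.lt_of_lt i j h p hi p hj)
  · exact lt_irrefl p (E.lt_of_lt j i h p hj p hi)

lemma sum_ite_mem_le (j : ℕ) {c : ℝ} (hc : 0 ≤ c) :
    ∑ i, (if j ∈ E.sets i then c else 0) ≤ c := by
  rw [sum_ite, sum_const_zero, add_zero, sum_const, nsmul_eq_mul]
  refine mul_le_of_le_one_left hc (Nat.cast_le_one.mpr (card_le_one.mpr fun i hi i' hi' => ?_))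
  by_contra hne
  exact Finset.disjoint_left.mp (E.pairwise_disjoint hne) (mem_filter.mp hi).2 (mem_filter.mp hi').2

lemma abs_sum_filter_apply_le (y : ℕ →₀ ℝ) (j : ℕ) :
    |(∑ i, y.filter (· ∈ E.sets i)) j| ≤ |y j| := by
  rw [Finsupp.finsetSum_apply]
  refine (abs_sum_le_sum_abs _ _).trans ((sum_le_sum fun i _ => ?_).trans
    (E.sum_ite_mem_le j (abs_nonneg (y j))))
  rw [Finsupp.filter_apply]
  split_ifs <;> simp

end AdmissibleFamily

def l1 (y : ℕ →₀ ℝ) : ℝ := ∑ j ∈ y.support, |y j|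

lemma l1_nonneg (y : ℕ →₀ ℝ) : 0 ≤ l1 y := sum_nonneg fun j _ => abs_nonneg (y j)

lemma abs_apply_le_l1 (y : ℕ →₀ ℝ) (j : ℕ) : |y j| ≤ l1 y := by
  by_cases hj : j ∈ y.support
  · exact single_le_sum (f := fun j => |y j|) (fun j _ => abs_nonneg (y j)) hj
  · rw [Finsupp.notMem_support_iff.mp hj, abs_zero]; exact l1_nonneg y

lemma AdmissibleFamily.sum_l1_filter_le (E : AdmissibleFamily) (y : ℕ →₀ ℝ) :
    ∑ i, l1 (y.filter (· ∈ E.sets i)) ≤ l1 y := by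
  have h : ∀ i, l1 (y.filter (· ∈ E.sets i)) = ∑ j ∈ y.support, if j ∈ E.sets i then |y j| else 0 :=
    fun i => by
      rw [l1, Finsupp.support_filter, sum_filter]
      exact sum_congr rfl fun j _ => by split_ifs with hj <;> simp [hj]
  simp only [h]
  rw [sum_comm]
  exact sum_le_sum fun j _ => E.sum_ite_mem_le j (abs_nonneg _)

def tsiApprox : ℕ → (ℕ →₀ ℝ) → ℝ
  | 0, y => ⨆ j, |y j|
  | m + 1, y => max (tsiApprox m y)
      (⨆ E : AdmissibleFamily, (1 / 2 : ℝ) * ∑ i, tsiApprox m (y.filter (· ∈ E.sets i)))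

lemma tsiApprox_nonneg : ∀ m y, 0 ≤ tsiApprox m y
  | 0, _ => Real.iSup_nonneg fun _ => abs_nonneg _
  | m + 1, y => (tsiApprox_nonneg m y).trans (le_max_left _ _)

lemma tsiApprox_zero_le {y : ℕ →₀ ℝ} {c : ℝ} (h : ∀ j, |y j| ≤ c) : tsiApprox 0 y ≤ c :=
  ciSup_le h

lemma tsiApprox_succ_le {m : ℕ} {y : ℕ →₀ ℝ} {c : ℝ} (h : tsiApprox m y ≤ c)
    (hE : ∀ E : AdmissibleFamily, (1 / 2 : ℝ) * ∑ i, tsiApprox m (y.filter (· ∈ E.sets i)) ≤ c) :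
    tsiApprox (m + 1) y ≤ c :=
  max_le h (Real.iSup_le hE ((tsiApprox_nonneg m y).trans h))

lemma half_sum_tsiApprox_filter_le_l1 {m : ℕ} (h : ∀ z, tsiApprox m z ≤ l1 z)
    (E : AdmissibleFamily) (y : ℕ →₀ ℝ) :
    (1 / 2 : ℝ) * ∑ i, tsiApprox m (y.filter (· ∈ E.sets i)) ≤ l1 y := by
  have := (sum_le_sum fun i _ => h (y.filter (· ∈ E.sets i))).trans (E.sum_l1_filter_le y)
  linarith [l1_nonneg y]

lemma tsiApprox_le_l1 : ∀ m y, tsiApprox m y ≤ l1 y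
  | 0, y => tsiApprox_zero_le (abs_apply_le_l1 y)
  | m + 1, y => tsiApprox_succ_le (tsiApprox_le_l1 m y)
      fun E => half_sum_tsiApprox_filter_le_l1 (tsiApprox_le_l1 m) E y

lemma tsiApprox_le_succ (m : ℕ) (y : ℕ →₀ ℝ) : tsiApprox m y ≤ tsiApprox (m + 1) y :=
  le_max_left _ _

lemma half_sum_le_tsiApprox_succ (m : ℕ) (y : ℕ →₀ ℝ) (E : AdmissibleFamily) :
    (1 / 2 : ℝ) * ∑ i, tsiApprox m (y.filter (· ∈ E.sets i)) ≤ tsiApprox (m + 1) y := by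
  refine (le_ciSup (f := fun E : AdmissibleFamily =>
    (1 / 2 : ℝ) * ∑ i, tsiApprox m (y.filter (· ∈ E.sets i))) ⟨l1 y, ?_⟩ E).trans (le_max_right _ _)
  rintro _ ⟨E, rfl⟩
  exact half_sum_tsiApprox_filter_le_l1 (tsiApprox_le_l1 m) E y

lemma abs_apply_le_tsiApprox (y : ℕ →₀ ℝ) (j : ℕ) : ∀ m, |y j| ≤ tsiApprox m y
  | 0 => le_ciSup (f := fun j => |y j|) ⟨l1 y, by rintro _ ⟨j, rfl⟩; exact abs_apply_le_l1 y j⟩ j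
  | m + 1 => (abs_apply_le_tsiApprox y j m).trans (tsiApprox_le_succ m y)

lemma tsiApprox_add_le : ∀ m (y z : ℕ →₀ ℝ), tsiApprox m (y + z) ≤ tsiApprox m y + tsiApprox m z
  | 0, y, z => tsiApprox_zero_le fun j => (abs_add_le _ _).trans
      (add_le_add (abs_apply_le_tsiApprox y j 0) (abs_apply_le_tsiApprox z j 0))
  | m + 1, y, z => by
    refine tsiApprox_succ_le ((tsiApprox_add_le m y z).trans
      (add_le_add (tsiApprox_le_succ m y) (tsiApprox_le_succ m z))) fun E => ?_
    calc (1 / 2 : ℝ) * ∑ i, tsiApprox m ((y + z).filter (· ∈ E.sets i))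
        ≤ (1 / 2 : ℝ) * ∑ i, tsiApprox m (y.filter (· ∈ E.sets i))
          + (1 / 2 : ℝ) * ∑ i, tsiApprox m (z.filter (· ∈ E.sets i)) := by
          rw [← mul_add, ← sum_add_distrib]
          gcongr with i
          rw [Finsupp.filter_add]
          exact tsiApprox_add_le m _ _
      _ ≤ tsiApprox (m + 1) y + tsiApprox (m + 1) z :=
          add_le_add (half_sum_le_tsiApprox_succ m y E) (half_sum_le_tsiApprox_succ m z E)

lemma tsiApprox_smul_le : ∀ m (c : ℝ) (y : ℕ →₀ ℝ), tsiApprox m (c • y) ≤ |c| * tsiApprox m y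
  | 0, c, y => tsiApprox_zero_le fun j => by
      rw [Finsupp.smul_apply, smul_eq_mul, abs_mul]
      exact mul_le_mul_of_nonneg_left (abs_apply_le_tsiApprox y j 0) (abs_nonneg c)
  | m + 1, c, y => by
    refine tsiApprox_succ_le ((tsiApprox_smul_le m c y).trans
      (mul_le_mul_of_nonneg_left (tsiApprox_le_succ m y) (abs_nonneg c))) fun E => ?_
    calc (1 / 2 : ℝ) * ∑ i, tsiApprox m ((c • y).filter (· ∈ E.sets i))
        ≤ |c| * ((1 / 2 : ℝ) * ∑ i, tsiApprox m (y.filter (· ∈ E.sets i))) := by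
          rw [mul_left_comm, mul_sum univ _ |c|]
          gcongr with i
          rw [Finsupp.filter_smul]
          exact tsiApprox_smul_le m c _
      _ ≤ |c| * tsiApprox (m + 1) y :=
          mul_le_mul_of_nonneg_left (half_sum_le_tsiApprox_succ m y E) (abs_nonneg c)

lemma tsiApprox_sum_le {ι : Type*} (m : ℕ) (s : Finset ι) (y : ι → ℕ →₀ ℝ) :
    tsiApprox m (∑ k ∈ s, y k) ≤ ∑ k ∈ s, tsiApprox m (y k) :=
  le_sum_of_subadditive (tsiApprox m)
    (by simpa using tsiApprox_smul_le m 0 0) (tsiApprox_add_le m) s y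

lemma IsTsirelsonNorm.tsiApprox_le {N : (ℕ →₀ ℝ) → ℝ} (hN : IsTsirelsonNorm N) :
    ∀ m y, tsiApprox m y ≤ N y
  | 0, y => tsiApprox_zero_le (hN.1.2.2.2.1 y)
  | m + 1, y => by
    refine tsiApprox_succ_le (hN.tsiApprox_le m y) fun E => ?_
    calc (1 / 2 : ℝ) * ∑ i, tsiApprox m (y.filter (· ∈ E.sets i))
        ≤ (1 / 2 : ℝ) * ∑ i, N (y.filter (· ∈ E.sets i)) := by
          gcongr with i
          exact hN.tsiApprox_le m _
      _ ≤ N (∑ i, y.filter (· ∈ E.sets i)) := by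
          refine hN.1.2.2.2.2 E.len _ (fun i j hij p hp q hq => ?_) (fun i p hp => ?_)
          · simp only [Finsupp.support_filter, mem_filter] at hp hq
            exact E.lt_of_lt i j hij p hp.2 q hq.2
          · simp only [Finsupp.support_filter, mem_filter] at hp
            exact E.len_le i p hp.2
      _ ≤ N y := hN.mono (E.abs_sum_filter_apply_le y)

lemma eq_abs_mul_of_smul_le {V : Type*} [AddCommGroup V] [Module ℝ V] {f : V → ℝ}
    (hf : ∀ x, 0 ≤ f x) (h : ∀ (c : ℝ) x, f (c • x) ≤ |c| * f x) (c : ℝ) (x : V) :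
    f (c • x) = |c| * f x := by
  rcases eq_or_ne c 0 with rfl | hc
  · exact le_antisymm (h 0 x) (by simpa using hf _)
  refine le_antisymm (h c x) ?_
  calc |c| * f x = |c| * f (c⁻¹ • c • x) := by rw [inv_smul_smul₀ hc]
    _ ≤ |c| * (|c⁻¹| * f (c • x)) := by gcongr; exact h _ _
    _ = f (c • x) := by rw [abs_inv, ← mul_assoc, mul_inv_cancel₀ (abs_ne_zero.mpr hc), one_mul]

def tsiLimit (y : ℕ →₀ ℝ) : ℝ := ⨆ m, tsiApprox m y

lemma bddAbove_range_tsiApprox (y : ℕ →₀ ℝ) : BddAbove (Set.range fun m => tsiApprox m y) :=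
  ⟨l1 y, by rintro _ ⟨m, rfl⟩; exact tsiApprox_le_l1 m y⟩

lemma tsiApprox_le_tsiLimit (m : ℕ) (y : ℕ →₀ ℝ) : tsiApprox m y ≤ tsiLimit y :=
  le_ciSup (bddAbove_range_tsiApprox y) m

lemma tendsto_tsiApprox (y : ℕ →₀ ℝ) :
    Tendsto (fun m => tsiApprox m y) atTop (nhds (tsiLimit y)) :=
  tendsto_atTop_ciSup (monotone_nat_of_le_succ fun m => tsiApprox_le_succ m y)
    (bddAbove_range_tsiApprox y)

lemma isTsiCandidate_tsiLimit : IsTsiCandidate tsiLimit := by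
  have hnonneg : ∀ y, 0 ≤ tsiLimit y := fun y =>
    (tsiApprox_nonneg 0 y).trans (tsiApprox_le_tsiLimit 0 y)
  refine ⟨hnonneg, eq_abs_mul_of_smul_le hnonneg fun c y => ciSup_le fun m =>
      (tsiApprox_smul_le m c y).trans (by gcongr; exact tsiApprox_le_tsiLimit m y),
    fun y z => ciSup_le fun m => (tsiApprox_add_le m y z).trans
      (add_le_add (tsiApprox_le_tsiLimit m y) (tsiApprox_le_tsiLimit m z)),
    fun y j => (abs_apply_le_tsiApprox y j 0).trans (tsiApprox_le_tsiLimit 0 y),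
    fun n xs hsucc hn => ?_⟩
  let E : AdmissibleFamily := ⟨n, fun j => (xs j).support, hsucc, hn⟩
  have hfilter : ∀ j, (∑ k, xs k).filter (· ∈ (xs j).support) = xs j := fun j => by
    rw [Finsupp.filter_sum, sum_eq_single j (fun k _ hkj => ?_) (by simp)]
    · exact (Finsupp.filter_eq_self_iff _ _).mpr fun p hp => Finsupp.mem_support_iff.mpr hp
    · exact (Finsupp.filter_eq_zero_iff _ _).mpr fun p hp => Finsupp.notMem_support_iff.mp
        (Finset.disjoint_left.mp (E.pairwise_disjoint hkj.symm) hp)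
  refine le_of_tendsto' ((tendsto_finsetSum _ fun j _ => tendsto_tsiApprox (xs j)).const_mul _)
    fun m => ?_
  have h := half_sum_le_tsiApprox_succ m (∑ k, xs k) E
  simp only [E, hfilter] at h
  exact h.trans (tsiApprox_le_tsiLimit _ _)

lemma IsTsirelsonNorm.le_tsiLimit {N : (ℕ →₀ ℝ) → ℝ} (hN : IsTsirelsonNorm N) (y : ℕ →₀ ℝ) :
    N y ≤ tsiLimit y :=
  hN.2 _ isTsiCandidate_tsiLimit y

section BlockLabel

variable {α : Type*} [LinearOrder α]

/-- `none` if `I = ∅`, `inl i` if `I = {i}`, and `inr (min I)` if `I` has two or more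
elements. -/
def blockLabel (I : Finset α) : Option (α ⊕ α) :=
  if h : I.Nonempty then
    some (if ∃ i ∈ I, I.min' h < i then .inr (I.min' h) else .inl (I.min' h))
  else none

lemma nonempty_of_blockLabel_eq_some {I : Finset α} {ℓ : α ⊕ α} (h : blockLabel I = some ℓ) :
    I.Nonempty := by
  by_contra hI
  simp [blockLabel, hI] at h

lemma blockLabel_eq_some_inr {I : Finset α} {j : α} (h : blockLabel I = some (.inr j)) :
    j ∈ I ∧ ∃ i ∈ I, j < i := by
  unfold blockLabel at h
  split_ifs at h with hI hlt <;> simp only [Option.some.injEq, Sum.inr.injEq,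
    reduceCtorEq] at h
  exact h ▸ ⟨I.min'_mem hI, hlt⟩

lemma eq_blockLabel_inl_add_sum_blockLabel_inr {A : Type*} [AddCommMonoid A] [Fintype α]
    (I : Finset α) (i : α) {v : A} (hv : i ∉ I → v = 0) :
    v = (if blockLabel I = some (.inl i) then v else 0) +
      ∑ j, if blockLabel I = some (.inr j) then v else 0 := by
  unfold blockLabel
  by_cases hI : I.Nonempty
  · by_cases hlt : ∃ i' ∈ I, I.min' hI < i'
    · simp [hI, hlt]
    · simp only [hI, hlt, dif_pos, if_false, Option.some.injEq, Sum.inl.injEq, reduceCtorEq,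
        sum_const_zero, add_zero]
      split_ifs with h
      · rfl
      · refine hv fun hi => h (le_antisymm (I.min'_le i hi) ?_)
        exact not_lt.mp fun h' => hlt ⟨i, hi, h'⟩
  · simp only [hI, dif_neg, not_false_eq_true, reduceCtorEq, if_false, sum_const_zero,
      add_zero]
    exact hv fun hi => hI ⟨i, hi⟩

end BlockLabel

namespace AdmissibleFamily

variable (E : AdmissibleFamily) {ι : Type*}

open Classical in
def hits (y : ℕ →₀ ℝ) : Finset (Fin E.len) := univ.filter fun i => y.filter (· ∈ E.sets i) ≠ 0

open Classical in
def blockFiber (s : Finset ι) (x : ι → ℕ →₀ ℝ) (ℓ : Fin E.len ⊕ Fin E.len) : Finset ι :=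
  s.filter fun k => blockLabel (E.hits (x k)) = some ℓ

variable {E}

lemma exists_mem_of_mem_hits {y : ℕ →₀ ℝ} {i : Fin E.len} (h : i ∈ E.hits y) :
    ∃ p ∈ y.support, p ∈ E.sets i := by
  by_contra hne
  refine (mem_filter.mp h).2 ((Finsupp.filter_eq_zero_iff _ _).mpr fun p hp => ?_)
  by_contra hp'
  exact hne ⟨p, Finsupp.mem_support_iff.mpr hp', hp⟩

end AdmissibleFamily

section MainEstimate

variable {ι : Type*} {E : AdmissibleFamily} {s : Finset ι} {x : ι → ℕ →₀ ℝ} {a : ι → ℕ}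

lemma filter_sum_eq_sum_blockFiber (i : Fin E.len) :
    (∑ k ∈ s, x k).filter (· ∈ E.sets i) =
      ∑ k ∈ E.blockFiber s x (.inl i), (x k).filter (· ∈ E.sets i) +
        ∑ j, ∑ k ∈ E.blockFiber s x (.inr j), (x k).filter (· ∈ E.sets i) := by
  rw [Finsupp.filter_sum, sum_congr rfl fun k _ =>
    eq_blockLabel_inl_add_sum_blockLabel_inr (E.hits (x k)) i
      (v := (x k).filter (· ∈ E.sets i)) fun h => by simpa [AdmissibleFamily.hits] using h,
    sum_add_distrib, sum_comm]
  simp only [AdmissibleFamily.blockFiber, sum_filter]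

/-- Each vector of the fibre puts a point of its support into `E_j`, below a point of the support
of `x k` in a later block; by disjointness these points are distinct. -/
lemma card_blockFiber_inr_le (hx : (s : Set ι).PairwiseDisjoint fun k => (x k).support)
    (hxa : ∀ k ∈ s, ∀ p ∈ (x k).support, p ≤ a k) {j : Fin E.len} {k : ι}
    (hk : k ∈ E.blockFiber s x (.inr j)) :
    #(E.blockFiber s x (.inr j)) ≤ a k := by
  have hmem : ∀ k ∈ E.blockFiber s x (.inr j), k ∈ s ∧ j ∈ E.hits (x k) ∧
      ∃ i ∈ E.hits (x k), j < i := fun k hk =>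
    ⟨(mem_filter.mp hk).1, blockLabel_eq_some_inr (mem_filter.mp hk).2⟩
  have hp : ∀ k ∈ E.blockFiber s x (.inr j), ∃ p ∈ (x k).support, p ∈ E.sets j :=
    fun k hk => AdmissibleFamily.exists_mem_of_mem_hits (hmem k hk).2.1
  choose! p hpx hpE using hp
  obtain ⟨hks, -, i, hi, hji⟩ := hmem k hk
  obtain ⟨q, hqx, hqE⟩ := AdmissibleFamily.exists_mem_of_mem_hits hi
  calc #(E.blockFiber s x (.inr j)) ≤ #(range (a k)) := by
        refine card_le_card_of_injOn p (fun k' hk' => mem_range.mpr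
          ((E.lt_of_lt j i hji _ (hpE k' hk') q hqE).trans_le (hxa k hks q hqx)))
          fun k₁ h₁ k₂ h₂ heq => ?_
        by_contra hne
        exact Finset.disjoint_left.mp (hx (hmem k₁ h₁).1 (hmem k₂ h₂).1 hne) (hpx k₁ h₁)
          (heq ▸ hpx k₂ h₂)
    _ = a k := card_range _

lemma len_le_of_mem_support_atoms_blockFiber (hxa : ∀ k ∈ s, ∀ p ∈ (x k).support, p ≤ a k)
    {ℓ : Fin E.len ⊕ Fin E.len} {w : ι → ℝ} {p : ℕ}
    (hp : p ∈ (atoms (E.blockFiber s x ℓ) a w).support) : E.len ≤ p := by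
  obtain ⟨k, hk, rfl⟩ := mem_image.mp (support_atoms_subset hp)
  obtain ⟨i, hi⟩ := nonempty_of_blockLabel_eq_some (mem_filter.mp hk).2
  obtain ⟨q, hqx, hqE⟩ := AdmissibleFamily.exists_mem_of_mem_hits hi
  exact (E.len_le i q hqE).trans (hxa k (mem_filter.mp hk).1 q hqx)

lemma sum_sharp_atoms_blockFiber_le {N Ns : (ℕ →₀ ℝ) → ℝ} (hN : ∀ y, 0 ≤ N y)
    (hNs : IsTsirelsonSharpNorm Ns) (ha : Function.Injective a)
    (hxa : ∀ k ∈ s, ∀ p ∈ (x k).support, p ≤ a k) :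
    ∑ ℓ, Ns (atoms (E.blockFiber s x ℓ) a fun k => N (x k)) ≤
      2 * Ns (atoms s a fun k => N (x k)) := by
  classical
  have hF : Pairwise (Disjoint on E.blockFiber s x) := fun ℓ ℓ' hne =>
    disjoint_filter.mpr fun _ _ h h' => hne (Option.some_injective _ (h.symm.trans h'))
  have key := hNs.1.half_sum_le (n := E.len) (by simp [two_mul])
    (fun ℓ => atoms (E.blockFiber s x ℓ) a fun k => N (x k))
    (fun ℓ ℓ' hne => disjoint_support_atoms ha (hF hne))
    (fun ℓ _ hp => len_le_of_mem_support_atoms_blockFiber hxa hp)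
  have hunion : ∑ ℓ, atoms (E.blockFiber s x ℓ) a (fun k => N (x k)) =
      atoms (univ.biUnion (E.blockFiber s x)) a fun k => N (x k) :=
    (sum_biUnion fun ℓ _ ℓ' _ hne => hF hne).symm
  have hmono : Ns (atoms (univ.biUnion (E.blockFiber s x)) a fun k => N (x k)) ≤
      Ns (atoms s a fun k => N (x k)) :=
    hNs.mono (abs_atoms_apply_le (biUnion_subset.mpr fun ℓ _ => filter_subset _ _)
      (fun k _ => ⟨hN _, le_rfl⟩) fun k _ => hN _)
  rw [hunion] at key
  linarith

lemma tsiApprox_sum_blockFiber_inl_le {N Ns : (ℕ →₀ ℝ) → ℝ} (hN : IsTsirelsonNorm N)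
    (hNs : IsTsirelsonSharpNorm Ns) {m : ℕ}
    (ih : ∀ (s : Finset ι) (x : ι → ℕ →₀ ℝ),
      (s : Set ι).PairwiseDisjoint (fun k => (x k).support) →
      (∀ k ∈ s, ∀ p ∈ (x k).support, p ≤ a k) →
      tsiApprox m (∑ k ∈ s, x k) ≤ 4 * Ns (atoms s a fun k => N (x k)))
    (hx : (s : Set ι).PairwiseDisjoint fun k => (x k).support)
    (hxa : ∀ k ∈ s, ∀ p ∈ (x k).support, p ≤ a k) (i : Fin E.len) :
    tsiApprox m (∑ k ∈ E.blockFiber s x (.inl i), (x k).filter (· ∈ E.sets i)) ≤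
      4 * Ns (atoms (E.blockFiber s x (.inl i)) a fun k => N (x k)) := by
  have hFs : E.blockFiber s x (.inl i) ⊆ s := filter_subset _ _
  have hsub : ∀ k, ((x k).filter (· ∈ E.sets i)).support ⊆ (x k).support := fun k => by
    rw [Finsupp.support_filter]; exact filter_subset _ _
  refine (ih _ _ ((hx.subset hFs).mono hsub)
    fun k hk p hp => hxa k (hFs hk) p (hsub k hp)).trans ?_
  gcongr
  refine hNs.mono (abs_atoms_apply_le subset_rfl (fun k _ => ⟨hN.1.1 _, hN.mono fun j => ?_⟩)
    fun k _ => hN.1.1 _)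
  rw [Finsupp.filter_apply]
  split_ifs <;> simp

lemma half_sum_tsiApprox_filter_le {N Ns : (ℕ →₀ ℝ) → ℝ} (hN : IsTsirelsonNorm N)
    (hNs : IsTsirelsonSharpNorm Ns) (ha : Function.Injective a) {m : ℕ}
    (ih : ∀ (s : Finset ι) (x : ι → ℕ →₀ ℝ),
      (s : Set ι).PairwiseDisjoint (fun k => (x k).support) →
      (∀ k ∈ s, ∀ p ∈ (x k).support, p ≤ a k) →
      tsiApprox m (∑ k ∈ s, x k) ≤ 4 * Ns (atoms s a fun k => N (x k)))
    (E : AdmissibleFamily) (hx : (s : Set ι).PairwiseDisjoint fun k => (x k).support)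
    (hxa : ∀ k ∈ s, ∀ p ∈ (x k).support, p ≤ a k) :
    (1 / 2 : ℝ) * ∑ i, tsiApprox m ((∑ k ∈ s, x k).filter (· ∈ E.sets i)) ≤
      4 * Ns (atoms s a fun k => N (x k)) := by
  set F := E.blockFiber s x
  set piece := fun ℓ => Ns (atoms (F ℓ) a fun k => N (x k))
  have hsingle : ∀ i, tsiApprox m (∑ k ∈ F (.inl i), (x k).filter (· ∈ E.sets i)) ≤
      4 * piece (.inl i) := fun i => tsiApprox_sum_blockFiber_inl_le hN hNs ih hx hxa i
  have hmulti : ∀ j, ∑ k ∈ F (.inr j), N (x k) ≤ 2 * piece (.inr j) := fun j =>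
    sum_le_two_mul_atoms hNs.1 ha fun k hk => card_blockFiber_inr_le hx hxa hk
  have hpiece : ∀ k, (1 / 2 : ℝ) * ∑ i, tsiApprox m ((x k).filter (· ∈ E.sets i)) ≤ N (x k) :=
    fun k => (half_sum_le_tsiApprox_succ m _ E).trans (hN.tsiApprox_le _ _)
  calc (1 / 2 : ℝ) * ∑ i, tsiApprox m ((∑ k ∈ s, x k).filter (· ∈ E.sets i))
      ≤ (1 / 2 : ℝ) * ∑ i, (4 * piece (.inl i) +
          ∑ j, ∑ k ∈ F (.inr j), tsiApprox m ((x k).filter (· ∈ E.sets i))) := by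
        gcongr with i
        rw [filter_sum_eq_sum_blockFiber]
        exact (tsiApprox_add_le _ _ _).trans (add_le_add (hsingle i)
          ((tsiApprox_sum_le _ _ _).trans (sum_le_sum fun j _ => tsiApprox_sum_le _ _ _)))
    _ = 2 * ∑ i, piece (.inl i) + ∑ j, ∑ k ∈ F (.inr j),
          (1 / 2 : ℝ) * ∑ i, tsiApprox m ((x k).filter (· ∈ E.sets i)) := by
        simp only [sum_add_distrib, mul_add, mul_sum]
        rw [sum_comm]
        congr 1
        · exact sum_congr rfl fun _ _ => by ring
        · exact sum_congr rfl fun _ _ => sum_comm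
    _ ≤ 2 * ∑ i, piece (.inl i) + ∑ j, 2 * piece (.inr j) := by
        gcongr with j
        exact (sum_le_sum fun k _ => hpiece k).trans (hmulti j)
    _ = 2 * ∑ ℓ, piece ℓ := by rw [Fintype.sum_sum_type, mul_add, mul_sum, mul_sum]
    _ ≤ 4 * Ns (atoms s a fun k => N (x k)) := by
        linarith [sum_sharp_atoms_blockFiber_le (E := E) hN.1.1 hNs ha hxa]

theorem tsiApprox_sum_le_four_mul_atoms {N Ns : (ℕ →₀ ℝ) → ℝ} (hN : IsTsirelsonNorm N)
    (hNs : IsTsirelsonSharpNorm Ns) (ha : Function.Injective a) (m : ℕ) :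
    ∀ (s : Finset ι) (x : ι → ℕ →₀ ℝ), (s : Set ι).PairwiseDisjoint (fun k => (x k).support) →
      (∀ k ∈ s, ∀ p ∈ (x k).support, p ≤ a k) →
      tsiApprox m (∑ k ∈ s, x k) ≤ 4 * Ns (atoms s a fun k => N (x k)) := by
  induction m with
  | zero =>
    intro s x hx _
    refine tsiApprox_zero_le fun p => ?_
    by_cases hp : (∑ k ∈ s, x k) p = 0
    · rw [hp, abs_zero]
      exact mul_nonneg (by norm_num) (hNs.1.1 _)
    obtain ⟨k, hk, hkp⟩ := exists_ne_zero_of_sum_ne_zero (by rwa [Finsupp.finsetSum_apply] at hp)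
    have hsum : (∑ k ∈ s, x k) p = x k p := by
      rw [Finsupp.finsetSum_apply]
      exact sum_eq_single_of_mem k hk fun k' hk' hne => Finsupp.notMem_support_iff.mp fun h =>
        Finset.disjoint_left.mp (hx hk' hk hne) h (Finsupp.mem_support_iff.mpr hkp)
    calc |(∑ k ∈ s, x k) p| = |x k p| := by rw [hsum]
      _ ≤ N (x k) := hN.1.2.2.2.1 _ _
      _ = |atoms {k} a (fun k => N (x k)) (a k)| := by simp [atoms, abs_of_nonneg (hN.1.1 _)]
      _ ≤ |atoms s a (fun k => N (x k)) (a k)| :=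
        abs_atoms_apply_le (singleton_subset_iff.mpr hk) (by simp [hN.1.1]) (fun _ _ => hN.1.1 _) _
      _ ≤ Ns (atoms s a fun k => N (x k)) := hNs.1.2.2.2.1 _ _
      _ ≤ 4 * Ns (atoms s a fun k => N (x k)) := by
        linarith [hNs.1.1 (atoms s a fun k => N (x k))]
  | succ m ih =>
    intro s x hx hxa
    exact tsiApprox_succ_le (ih s x hx hxa) fun E =>
      half_sum_tsiApprox_filter_le hN hNs ha ih E hx hxa

end MainEstimate

/-- Lemma 5.11. If `x 1, …, x N` are pairwise disjointly supported vectors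
in `c₀₀` and `a k = max supp (x k)`, then
`‖Σ x k‖_T ≤ 4 ‖Σ ‖x k‖_T e_{a k}‖_T^#`. -/
theorem statement18 (N Ns : (ℕ →₀ ℝ) → ℝ)
    (hN : IsTsirelsonNorm N) (hNs : IsTsirelsonSharpNorm Ns)
    (M : ℕ) (x : Fin M → (ℕ →₀ ℝ))
    (hdisj : Pairwise fun j k => Disjoint (x j).support (x k).support)
    (a : Fin M → ℕ)
    (ha : ∀ k, a k ∈ (x k).support ∧ ∀ i ∈ (x k).support, i ≤ a k) :
    N (∑ k, x k) ≤ 4 * Ns (∑ k, Finsupp.single (a k) (N (x k))) := by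
  have hinj : Function.Injective a := fun k k' h => by
    by_contra hne
    exact Finset.disjoint_left.mp (hdisj hne) (ha k).1 (h ▸ (ha k').1)
  calc N (∑ k, x k) ≤ tsiLimit (∑ k, x k) := hN.le_tsiLimit _
    _ ≤ 4 * Ns (∑ k, Finsupp.single (a k) (N (x k))) := ciSup_le fun m =>
      tsiApprox_sum_le_four_mul_atoms hN hNs hinj m univ x (fun k _ k' _ hne => hdisj hne)
        fun k _ => (ha k).2

end CK
end
end

section
/- Let n ∈ ℕ, let G ⊆ [n] × [n], and let (w_{ij})_{i,j∈[n]} be real numbers such that Σ_{j=1}^n w_{ij} = 1 for every i and Σ_{i=1}^n w_{ij} = 1 for every j. Let M = max_{1≤j≤n} Σ_{i=1}^n |w_{ij}| and b = Σ_{(i,j)∉G} |w_{ij}|. Then for every r ∈ ℕ there exist a subset σ of [n] with |σ| ≥ n − 3b − Mn/r and an injective map π : σ → [n] such that (i, π(i)) ∈ G^r for every i ∈ σ. -/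
open Function Filter
open scoped BigOperators ENNReal

noncomputable section

namespace CK

section
variable {n : ℕ} {G : Finset (Fin n × Fin n)}

open scoped Classical in
noncomputable def Ecol (n : ℕ) (G : Finset (Fin n × Fin n)) (A : Finset (Fin n)) :
    Finset (Fin n) :=
  Finset.univ.filter fun j => ∃ i ∈ A, (i, j) ∈ G

lemma mem_Ecol {A : Finset (Fin n)} {j : Fin n} :
    j ∈ Ecol n G A ↔ ∃ i ∈ A, (i, j) ∈ G := by
  classical simp [Ecol]

lemma mem_Vstep {A : Finset (Fin n)} {j : Fin n} :
    j ∈ Vstep n G A ↔ ∃ i ∈ A, ∃ k, (i, k) ∈ G ∧ (j, k) ∈ G := by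
  classical simp [Vstep]

lemma Vstep_mono {A B : Finset (Fin n)} (h : A ⊆ B) :
    Vstep n G A ⊆ Vstep n G B := by
  intro j hj
  rw [mem_Vstep] at *
  obtain ⟨i, hi, k, h1, h2⟩ := hj
  exact ⟨i, h hi, k, h1, h2⟩

lemma Ecol_mono {A B : Finset (Fin n)} (h : A ⊆ B) :
    Ecol n G A ⊆ Ecol n G B := by
  intro j hj
  rw [mem_Ecol] at *
  obtain ⟨i, hi, h1⟩ := hj
  exact ⟨i, h hi, h1⟩

lemma iterate_chain {S : Finset (Fin n)}
    (hS : S ⊆ Vstep n G S) : ∀ {a c : ℕ}, a ≤ c → (Vstep n G)^[a] S ⊆ (Vstep n G)^[c] S := by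
  have step : ∀ m : ℕ, (Vstep n G)^[m] S ⊆ (Vstep n G)^[m + 1] S := by
    intro m
    induction m with
    | zero => simpa using hS
    | succ m ih =>
      rw [iterate_succ_apply', iterate_succ_apply']
      exact Vstep_mono ih
  intro a c h
  induction h with
  | refl => exact fun x hx => hx
  | step h ih => exact fun x hx => step _ (ih hx)

lemma iterate_singleton :
    ∀ (s : ℕ) (S : Finset (Fin n)) (k : Fin n), k ∈ (Vstep n G)^[s] S →
      ∃ i ∈ S, k ∈ (Vstep n G)^[s] {i} := by
  intro s
  induction s with
  | zero => intro S k hk; exact ⟨k, hk, by simp⟩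
  | succ s ih =>
    intro S k hk
    rw [iterate_succ_apply'] at hk
    rw [mem_Vstep] at hk
    obtain ⟨i1, hi1, κ, h1, h2⟩ := hk
    obtain ⟨i, hi, hi1'⟩ := ih S i1 hi1
    refine ⟨i, hi, ?_⟩
    rw [iterate_succ_apply', mem_Vstep]
    exact ⟨i1, hi1', κ, h1, h2⟩

lemma singleton_subset_Vstep {i : Fin n}
    (h : ∃ k, (i, k) ∈ G) : ({i} : Finset (Fin n)) ⊆ Vstep n G {i} := by
  intro x hx
  rw [Finset.mem_singleton] at hx
  subst hx
  obtain ⟨k, hk⟩ := h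
  rw [mem_Vstep]
  exact ⟨x, Finset.mem_singleton_self x, k, hk, hk⟩

end

open scoped Classical in
theorem hall_bound (n : ℕ) (G : Finset (Fin n × Fin n)) (w : Fin n → Fin n → ℝ)
    (hrow : ∀ i, ∑ j, w i j = 1) (hcol : ∀ j, ∑ i, w i j = 1)
    (M : ℝ) (hM : ∀ j, ∑ i, |w i j| ≤ M)
    (b : ℝ) (hb : b = ∑ q ∈ Finset.univ.filter (fun q : Fin n × Fin n => q ∉ G), |w q.1 q.2|)
    (r : ℕ) (hr : 1 ≤ r) (A : Finset (Fin n)) :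
    (A.card : ℝ) ≤
      ((Finset.univ.filter fun j => ∃ i ∈ A, (i, j) ∈ Gpow n G r).card : ℝ)
        + (3 * b + M * n / r) := by
  -- off-graph mass bound
  have offG : ∀ P : Finset (Fin n × Fin n), (∀ p ∈ P, p ∉ G) →
      |∑ p ∈ P, w p.1 p.2| ≤ b := by
    intro P hP
    calc |∑ p ∈ P, w p.1 p.2| ≤ ∑ p ∈ P, |w p.1 p.2| := Finset.abs_sum_le_sum_abs _ _
    _ ≤ b := by
        rw [hb]
        apply Finset.sum_le_sum_of_subset_of_nonneg
        · intro p hp; simp [hP p hp]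
        · intro p _ _; exact abs_nonneg _
  have hb0 : 0 ≤ b := le_trans (abs_nonneg _) (offG ∅ (by simp))
  set A' : Finset (Fin n) := A.filter (fun i => ∃ k, (i, k) ∈ G) with hA'
  -- the rows discarded from `A` cost at most `b`
  have cardA : (A.card : ℝ) ≤ A'.card + b := by
    set R : Finset (Fin n) := A.filter (fun i => ¬ ∃ k, (i, k) ∈ G) with hR
    have hsplit : A'.card + R.card = A.card := Finset.card_filter_add_card_filter_not _
    have hRb : (R.card : ℝ) ≤ b := by
      have h1 : (R.card : ℝ) = ∑ _i ∈ R, (1 : ℝ) := by simp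
      have h2 : ∀ i ∈ R, (1 : ℝ) ≤ ∑ j, |w i j| := by
        intro i _
        calc (1 : ℝ) = |∑ j, w i j| := by rw [hrow i]; simp
        _ ≤ ∑ j, |w i j| := Finset.abs_sum_le_sum_abs _ _
      have h3 : ∑ i ∈ R, ∑ j, |w i j| = ∑ p ∈ R ×ˢ Finset.univ, |w p.1 p.2| := by
        rw [Finset.sum_product]
      have h4 : ∑ p ∈ R ×ˢ Finset.univ, |w p.1 p.2| ≤ b := by
        rw [hb]
        apply Finset.sum_le_sum_of_subset_of_nonneg
        · intro p hp
          rw [Finset.mem_product] at hp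
          have := (Finset.mem_filter.1 hp.1).2
          simp only [Finset.mem_filter, Finset.mem_univ, true_and]
          intro hpg
          exact this ⟨p.2, by rwa [← Prod.mk.eta (p := p)] at hpg⟩
        · intro p _ _; exact abs_nonneg _
      calc (R.card : ℝ) = ∑ _i ∈ R, (1:ℝ) := h1
      _ ≤ ∑ i ∈ R, ∑ j, |w i j| := Finset.sum_le_sum h2
      _ ≤ b := by rw [h3]; exact h4
    have : (A.card : ℝ) = A'.card + R.card := by exact_mod_cast congrArg Nat.cast hsplit.symm
    linarith
  -- conversion between product sums and double sums, with the off-graph bound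
  have offG2 : ∀ S T : Finset (Fin n), (∀ i ∈ S, ∀ j ∈ T, (i, j) ∉ G) →
      |∑ i ∈ S, ∑ j ∈ T, w i j| ≤ b := by
    intro S T h
    have h2 := offG (S ×ˢ T) (by
      intro p hp
      rw [Finset.mem_product] at hp
      have := h p.1 hp.1 p.2 hp.2
      rwa [Prod.mk.eta] at this)
    rwa [Finset.sum_product] at h2
  -- the increasing chain `A_s = V^[s] A'`
  have hA'edge : A' ⊆ Vstep n G A' := by
    intro i hi
    obtain ⟨k, hk⟩ := (Finset.mem_filter.1 hi).2
    rw [mem_Vstep]; exact ⟨i, hi, k, hk, hk⟩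
  set As : ℕ → Finset (Fin n) := fun s => (Vstep n G)^[s] A' with hAs
  have hchain : ∀ {a c : ℕ}, a ≤ c → As a ⊆ As c := fun h => iterate_chain hA'edge h
  -- pigeonhole: some step of the chain gains little column mass
  obtain ⟨s, hs_lt, hstep⟩ : ∃ s < r,
      (∑ j ∈ Ecol n G (As (s + 1)), ∑ i, |w i j|)
        - (∑ j ∈ Ecol n G (As s), ∑ i, |w i j|) ≤ M * n / r := by
    by_contra hcon
    push_neg at hcon
    set t : ℕ → ℝ := fun s => ∑ j ∈ Ecol n G (As s), ∑ i, |w i j| with htdef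
    have ht0 : 0 ≤ t 0 :=
      Finset.sum_nonneg fun j _ => Finset.sum_nonneg fun i _ => abs_nonneg _
    have htr : t r ≤ M * n := by
      calc t r ≤ ∑ j : Fin n, ∑ i, |w i j| :=
            Finset.sum_le_sum_of_subset_of_nonneg (Finset.subset_univ _)
              (fun j _ _ => Finset.sum_nonneg fun i _ => abs_nonneg _)
      _ ≤ ∑ _j : Fin n, M := Finset.sum_le_sum fun j _ => hM j
      _ = M * n := by simp [mul_comm]
    have htel : ∑ s ∈ Finset.range r, (t (s + 1) - t s) = t r - t 0 :=
      Finset.sum_range_sub t r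
    have h1 : ∑ _s ∈ Finset.range r, (M * n / r) <
        ∑ s ∈ Finset.range r, (t (s + 1) - t s) := by
      apply Finset.sum_lt_sum_of_nonempty
      · simp only [Finset.nonempty_range_iff]; omega
      · intro s hs; exact hcon s (Finset.mem_range.1 hs)
    rw [Finset.sum_const, Finset.card_range, htel, nsmul_eq_mul] at h1
    have hrne : (r : ℝ) ≠ 0 := Nat.cast_ne_zero.2 (by omega)
    have h2 : (r : ℝ) * (M * n / r) = M * n := by field_simp
    rw [h2] at h1
    linarith
  have hEsub : Ecol n G (As s) ⊆ Ecol n G (As (s + 1)) := Ecol_mono (hchain (Nat.le_succ s))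
  have hVsucc : As (s + 1) = Vstep n G (As s) := by
    rw [hAs]; exact Function.iterate_succ_apply' _ _ _
  -- (1): the big rows capture almost all their mass in `E(A_{s+1})`
  have key1 : (((As (s + 1)).card : ℝ)) - b ≤
      ∑ i ∈ As (s + 1), ∑ j ∈ Ecol n G (As (s + 1)), w i j := by
    have e1 : ∑ i ∈ As (s + 1),
        (∑ j ∈ Finset.univ \ Ecol n G (As (s + 1)), w i j
          + ∑ j ∈ Ecol n G (As (s + 1)), w i j) = ((As (s + 1)).card : ℝ) := by
      rw [Finset.sum_congr rfl fun i _ => Finset.sum_sdiff (Finset.subset_univ _)]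
      rw [Finset.sum_congr rfl fun i (_ : i ∈ As (s + 1)) => hrow i]
      simp
    rw [Finset.sum_add_distrib] at e1
    have e2 : |∑ i ∈ As (s + 1), ∑ j ∈ Finset.univ \ Ecol n G (As (s + 1)), w i j| ≤ b := by
      apply offG2
      intro i hi j hj hij
      rw [Finset.mem_sdiff] at hj
      exact hj.2 (mem_Ecol.2 ⟨i, hi, hij⟩)
    have := abs_le.1 e2
    linarith
  -- (2): the mass over the new columns is small
  have key2 : ∑ i ∈ As (s + 1), ∑ j ∈ Ecol n G (As (s + 1)) \ Ecol n G (As s), w i j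
      ≤ M * n / r := by
    rw [Finset.sum_comm]
    have e1 : ∀ j : Fin n, ∑ i ∈ As (s + 1), w i j ≤ ∑ i, |w i j| := by
      intro j
      calc ∑ i ∈ As (s + 1), w i j ≤ ∑ i ∈ As (s + 1), |w i j| :=
            Finset.sum_le_sum fun i _ => le_abs_self _
      _ ≤ ∑ i, |w i j| :=
            Finset.sum_le_sum_of_subset_of_nonneg (Finset.subset_univ _)
              fun i _ _ => abs_nonneg _
    have e2 : ∑ j ∈ Ecol n G (As (s + 1)) \ Ecol n G (As s), ∑ i, |w i j|
        = (∑ j ∈ Ecol n G (As (s + 1)), ∑ i, |w i j|)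
          - (∑ j ∈ Ecol n G (As s), ∑ i, |w i j|) := by
      have := Finset.sum_sdiff (f := fun j => ∑ i, |w i j|) hEsub
      linarith
    calc ∑ j ∈ Ecol n G (As (s + 1)) \ Ecol n G (As s), ∑ i ∈ As (s + 1), w i j
        ≤ ∑ j ∈ Ecol n G (As (s + 1)) \ Ecol n G (As s), ∑ i, |w i j| :=
          Finset.sum_le_sum fun j _ => e1 j
      _ ≤ M * n / r := by rw [e2]; exact hstep
  -- split the columns of (1)
  have e3 : ∑ i ∈ As (s + 1), ∑ j ∈ Ecol n G (As (s + 1)), w i j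
      = ∑ i ∈ As (s + 1), ∑ j ∈ Ecol n G (As (s + 1)) \ Ecol n G (As s), w i j
        + ∑ i ∈ As (s + 1), ∑ j ∈ Ecol n G (As s), w i j := by
    rw [← Finset.sum_add_distrib]
    exact Finset.sum_congr rfl fun i _ => (Finset.sum_sdiff hEsub).symm
  -- (4): the columns of `E(A_s)` have total mass `|E(A_s)|`, captured by rows of `A_{s+1}`
  have key4 : ∑ i ∈ As (s + 1), ∑ j ∈ Ecol n G (As s), w i j - b
      ≤ ((Ecol n G (As s)).card : ℝ) := by
    have e1 : ∑ j ∈ Ecol n G (As s),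
        (∑ i ∈ Finset.univ \ As (s + 1), w i j + ∑ i ∈ As (s + 1), w i j)
          = ((Ecol n G (As s)).card : ℝ) := by
      rw [Finset.sum_congr rfl fun j _ => Finset.sum_sdiff (Finset.subset_univ _)]
      rw [Finset.sum_congr rfl fun j (_ : j ∈ Ecol n G (As s)) => hcol j]
      simp
    rw [Finset.sum_add_distrib] at e1
    have e2 : |∑ i ∈ Finset.univ \ As (s + 1), ∑ j ∈ Ecol n G (As s), w i j| ≤ b := by
      apply offG2
      intro i hi j hj hij
      rw [Finset.mem_sdiff] at hi
      apply hi.2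
      rw [hVsucc, mem_Vstep]
      obtain ⟨i0, hi0, hi0j⟩ := mem_Ecol.1 hj
      exact ⟨i0, hi0, j, hi0j, hij⟩
    have e4 : ∑ j ∈ Ecol n G (As s), ∑ i ∈ Finset.univ \ As (s + 1), w i j
        = ∑ i ∈ Finset.univ \ As (s + 1), ∑ j ∈ Ecol n G (As s), w i j :=
      Finset.sum_comm
    have e5 : ∑ j ∈ Ecol n G (As s), ∑ i ∈ As (s + 1), w i j
        = ∑ i ∈ As (s + 1), ∑ j ∈ Ecol n G (As s), w i j := Finset.sum_comm
    have := abs_le.1 e2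
    rw [e4, e5] at e1
    linarith
  -- (5): the chain never shrinks
  have key5 : (A'.card : ℝ) ≤ ((As (s + 1)).card : ℝ) := by
    have : A' ⊆ As (s + 1) := by
      have h0 : As 0 = A' := rfl
      rw [← h0]; exact hchain (Nat.zero_le _)
    exact_mod_cast Finset.card_le_card this
  -- (6): `E(A_s)` is contained in the `G^r`-neighborhood of `A`
  have key6 : Ecol n G (As s) ⊆
      Finset.univ.filter fun j => ∃ i ∈ A, (i, j) ∈ Gpow n G r := by
    intro j hj
    obtain ⟨k, hk, hkj⟩ := mem_Ecol.1 hj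
    obtain ⟨i, hiA', hki⟩ := iterate_singleton s A' k hk
    have hedge : ∃ e, (i, e) ∈ G := (Finset.mem_filter.1 hiA').2
    have hkr : k ∈ (Vstep n G)^[r] {i} :=
      iterate_chain (singleton_subset_Vstep hedge) (le_of_lt hs_lt) hki
    simp only [Finset.mem_filter, Finset.mem_univ, true_and]
    refine ⟨i, (Finset.filter_subset _ _) hiA', ?_⟩
    have : ∃ k', (k', j) ∈ G ∧ k' ∈ (Vstep n G)^[r] {i} := ⟨k, hkj, hkr⟩
    simpa [Gpow] using this
  have key6' : ((Ecol n G (As s)).card : ℝ) ≤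
      ((Finset.univ.filter fun j => ∃ i ∈ A, (i, j) ∈ Gpow n G r).card : ℝ) :=
    by exact_mod_cast Finset.card_le_card key6
  linarith


open scoped Classical in
/-- Lemma 4.2. Let `G ⊆ [n] × [n]` and let `(w i j)` be a matrix with all
row sums and all column sums equal to `1`. Let `M` bound the column sums of `|w i j|` and let
`b = Σ_{(i,j) ∉ G} |w i j|`. Then for every `r ≥ 1` there are a subset `σ ⊆ [n]` with
`|σ| ≥ n − 3b − Mn/r` and an injective `π : σ → [n]` with `(i, π i) ∈ G^r` for all `i ∈ σ`. -/
theorem statement19 (n : ℕ) (G : Finset (Fin n × Fin n)) (w : Fin n → Fin n → ℝ)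
    (hrow : ∀ i, ∑ j, w i j = 1) (hcol : ∀ j, ∑ i, w i j = 1)
    (M : ℝ) (hM : ∀ j, ∑ i, |w i j| ≤ M)
    (b : ℝ) (hb : b = ∑ q ∈ Finset.univ.filter (fun q : Fin n × Fin n => q ∉ G), |w q.1 q.2|)
    (r : ℕ) (hr : 1 ≤ r) :
    ∃ σ : Finset (Fin n), (n : ℝ) - 3 * b - M * n / r ≤ σ.card ∧
      ∃ π : Fin n → Fin n, Set.InjOn π ↑σ ∧ ∀ i ∈ σ, (i, π i) ∈ Gpow n G r := by
  classical
  have hb0 : 0 ≤ b := hb ▸ Finset.sum_nonneg fun q _ => abs_nonneg _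
  set β : ℝ := 3 * b + M * n / r with hβ
  have hβ0 : 0 ≤ β := by
    rcases Nat.eq_zero_or_pos n with h0 | h0
    · rw [hβ, h0]; simp; linarith
    · have hM1 : (1 : ℝ) ≤ M := by
        have j0 : Fin n := ⟨0, h0⟩
        calc (1 : ℝ) = |∑ i, w i j0| := by rw [hcol j0]; simp
        _ ≤ ∑ i, |w i j0| := Finset.abs_sum_le_sum_abs _ _
        _ ≤ M := hM j0
      have h2 : 0 ≤ M * n / r :=
        div_nonneg (mul_nonneg (by linarith) (Nat.cast_nonneg n)) (Nat.cast_nonneg r)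
      rw [hβ]; linarith
  set d : ℕ := ⌊β⌋₊ with hd
  have hdβ : (d : ℝ) ≤ β := Nat.floor_le hβ0
  have hallN : ∀ A : Finset (Fin n),
      A.card ≤ (Finset.univ.filter fun j => ∃ i ∈ A, (i, j) ∈ Gpow n G r).card + d := by
    intro A
    by_contra hcon
    push_neg at hcon
    have h1 := hall_bound n G w hrow hcol M hM b hb r hr A
    have h2 : ((Finset.univ.filter fun j => ∃ i ∈ A, (i, j) ∈ Gpow n G r).card : ℝ) + d + 1
        ≤ (A.card : ℝ) := by exact_mod_cast hcon
    have h3 : ((d : ℕ) + 1 : ℕ) ≤ d := Nat.le_floor (by push_cast; rw [← hβ] at h1; linarith)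
    omega
  set t : Fin n → Finset (Fin n ⊕ Fin d) := fun i =>
    ((Finset.univ.filter fun j => (i, j) ∈ Gpow n G r).image Sum.inl) ∪
      (Finset.univ.image Sum.inr) with htdef
  have hHall : ∀ A : Finset (Fin n), A.card ≤ (A.biUnion t).card := by
    intro A
    rcases A.eq_empty_or_nonempty with rfl | ⟨i0, hi0⟩
    · simp
    have hsub : ((Finset.univ.filter fun j => ∃ i ∈ A, (i, j) ∈ Gpow n G r).image Sum.inl)
        ∪ (Finset.univ.image Sum.inr) ⊆ A.biUnion t := by
      intro x hx
      rcases Finset.mem_union.1 hx with hx | hx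
      · obtain ⟨j, hj, rfl⟩ := Finset.mem_image.1 hx
        obtain ⟨-, i, hiA, hij⟩ := Finset.mem_filter.1 hj
        refine Finset.mem_biUnion.2 ⟨i, hiA, ?_⟩
        exact Finset.mem_union_left _
          (Finset.mem_image_of_mem _ (Finset.mem_filter.2 ⟨Finset.mem_univ _, hij⟩))
      · exact Finset.mem_biUnion.2 ⟨i0, hi0, Finset.mem_union_right _ hx⟩
    have hdisj : Disjoint
        ((Finset.univ.filter fun j => ∃ i ∈ A, (i, j) ∈ Gpow n G r).image Sum.inl)
        ((Finset.univ.image Sum.inr : Finset (Fin n ⊕ Fin d))) := by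
      rw [Finset.disjoint_left]
      rintro x hx hx'
      obtain ⟨j, _, rfl⟩ := Finset.mem_image.1 hx
      obtain ⟨k, _, hk⟩ := Finset.mem_image.1 hx'
      exact absurd hk (by simp)
    have hcard : (((Finset.univ.filter fun j => ∃ i ∈ A, (i, j) ∈ Gpow n G r).image Sum.inl)
        ∪ (Finset.univ.image Sum.inr : Finset (Fin n ⊕ Fin d))).card
        = (Finset.univ.filter fun j => ∃ i ∈ A, (i, j) ∈ Gpow n G r).card + d := by
      rw [Finset.card_union_of_disjoint hdisj,
        Finset.card_image_of_injective _ Sum.inl_injective,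
        Finset.card_image_of_injective _ Sum.inr_injective, Finset.card_univ, Fintype.card_fin]
    calc A.card ≤ (Finset.univ.filter fun j => ∃ i ∈ A, (i, j) ∈ Gpow n G r).card + d :=
          hallN A
    _ = _ := hcard.symm
    _ ≤ (A.biUnion t).card := Finset.card_le_card hsub
  obtain ⟨f, hfinj, hft⟩ := (Finset.all_card_le_biUnion_card_iff_exists_injective t).1 hHall
  set σ : Finset (Fin n) := Finset.univ.filter (fun i => (f i).isLeft) with hσ
  set π : Fin n → Fin n := fun i => Sum.elim id (fun _ => i) (f i) with hπ
  have hmem : ∀ i ∈ σ, f i = Sum.inl (π i) ∧ (i, π i) ∈ Gpow n G r := by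
    intro i hi
    have hL : (f i).isLeft := (Finset.mem_filter.1 hi).2
    obtain ⟨j, hj⟩ := Sum.isLeft_iff.1 hL
    have hfi := hft i
    rw [hj] at hfi
    have hπi : π i = j := by rw [hπ]; simp [hj]
    rcases Finset.mem_union.1 hfi with hx | hx
    · obtain ⟨j', hj', hje⟩ := Finset.mem_image.1 hx
      have : j' = j := Sum.inl_injective hje
      subst this
      exact ⟨by rw [hj, hπi], by rw [hπi]; exact (Finset.mem_filter.1 hj').2⟩
    · obtain ⟨k, _, hk⟩ := Finset.mem_image.1 hx
      exact absurd hk (by simp)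
  have hτ : (Finset.univ.filter (fun i => ¬ (f i).isLeft)).card ≤ d := by
    have himg : (Finset.univ.filter (fun i : Fin n => ¬ (f i).isLeft)).image f ⊆
        (Finset.univ.image Sum.inr : Finset (Fin n ⊕ Fin d)) := by
      intro x hx
      obtain ⟨i, hi, rfl⟩ := Finset.mem_image.1 hx
      have hnl := (Finset.mem_filter.1 hi).2
      rcases h : f i with j | k
      · rw [h] at hnl; simp at hnl
      · exact Finset.mem_image_of_mem _ (Finset.mem_univ _)
    calc (Finset.univ.filter (fun i : Fin n => ¬ (f i).isLeft)).card
        = ((Finset.univ.filter (fun i : Fin n => ¬ (f i).isLeft)).image f).card :=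
          (Finset.card_image_of_injective _ hfinj).symm
    _ ≤ (Finset.univ.image Sum.inr : Finset (Fin n ⊕ Fin d)).card := Finset.card_le_card himg
    _ = d := by
        rw [Finset.card_image_of_injective _ Sum.inr_injective, Finset.card_univ,
          Fintype.card_fin]
  have hcards : σ.card + (Finset.univ.filter (fun i : Fin n => ¬ (f i).isLeft)).card = n := by
    rw [hσ, Finset.card_filter_add_card_filter_not, Finset.card_univ, Fintype.card_fin]
  refine ⟨σ, ?_, π, ?_, fun i hi => (hmem i hi).2⟩
  · have h1 : (n : ℝ) ≤ (σ.card : ℝ) + d := by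
      have : n ≤ σ.card + d := by omega
      exact_mod_cast this
    have h2 : (n : ℝ) - β ≤ σ.card := by linarith
    calc (n : ℝ) - 3 * b - M * n / r = n - β := by rw [hβ]; ring
    _ ≤ σ.card := h2
  · intro x hx y hy hxy
    have hx' := (hmem x (Finset.mem_coe.1 hx)).1
    have hy' := (hmem y (Finset.mem_coe.1 hy)).1
    apply hfinj
    rw [hx', hy', hxy]


end CK
end
end
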